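/- arXiv:2305.06479 — 2 statements merged into one kernel-verified Lean document; each statement's English description precedes it below -/
import Mathlib

section
/- Let A be the n-by-n reciprocal matrix of block form [[B, J],[J, J]] with B an s-by-s reciprocal matrix and n > s. If w is efficient for A and the subvector w[{1,...,s}] is efficient for B, then for every i in {s+1,...,n}, the vector w(i) is efficient for A(i). -/
/-!
If the indices split into `T` and its complement with only unit entries between them, and every
weight on `T` exceeds every weight off `T`, then scaling `w` down on `T` brings every ratio across
the cut closer to `1`, contradicting efficiency. Applied to level sets of `w`, this places every
weight of the `J`-block between two weights of the `B`-block (and makes `w` constant when there is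
no `B`-block). After deleting `i`, take `v` dominating `w(i)` and put `ρ = v / w`: efficiency for
`B` makes `ρ` constant on the `B`-block, and the unit entries between a `J`-index `p` and the
`B`-indices of larger and of smaller weight squeeze `ρ p` between two equal values.
-/

/-- A positive reciprocal (pairwise comparison) matrix. -/
def Reciprocal {n : ℕ} (A : Matrix (Fin n) (Fin n) ℝ) : Prop :=
  (∀ i j, 0 < A i j) ∧ ∀ i j, A j i = (A i j)⁻¹

/-- A positive vector `w` is efficient for `A` (Pareto optimality). -/
def Efficient {n : ℕ} (A : Matrix (Fin n) (Fin n) ℝ) (w : Fin n → ℝ) : Prop :=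
  (∀ i, 0 < w i) ∧ ∀ v : Fin n → ℝ, (∀ i, 0 < v i) →
    (∀ i j, |A i j - v i / v j| ≤ |A i j - w i / w j|) →
    ∀ i j, v i / v j = w i / w j

open Finset

lemma le_of_abs_sub_le_abs_sub {a x y : ℝ} (hay : a ≤ y) (h : |a - x| ≤ |a - y|) : x ≤ y := by
  rw [abs_sub_comm a x, abs_of_nonpos (sub_nonpos.2 hay)] at h
  linarith [le_abs_self (x - a)]

lemma Fin.val_le_val_succAbove {n : ℕ} (i : Fin (n + 1)) (p : Fin n) :
    p.val ≤ (i.succAbove p).val := by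
  unfold Fin.succAbove
  split_ifs <;> simp

lemma Fin.succAbove_castLE {n s : ℕ} (hs : s ≤ n) (i : Fin (n + 1)) (hi : s ≤ i.val) (a : Fin s) :
    i.succAbove (Fin.castLE hs a) = Fin.castLE (hs.trans n.le_succ) a :=
  Fin.ext (by rw [Fin.succAbove_of_castSucc_lt _ _ (by simp [Fin.lt_def]; omega)]; rfl)

section Efficient

variable {N : ℕ} {A : Matrix (Fin N) (Fin N) ℝ} {w : Fin N → ℝ}

lemma efficient_of_forall_eq_div (hw : ∀ p, 0 < w p) (hA : ∀ p q, A p q = w p / w q) :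
    Efficient A w := by
  refine ⟨hw, fun v _ hdom p q => ?_⟩
  have h := hdom p q
  rw [← hA p q, sub_self, abs_zero, abs_nonpos_iff, sub_eq_zero] at h
  rw [← h, hA]

theorem Efficient.exists_mem_le_of_cut_eq_one (hw : Efficient A w) {T : Finset (Fin N)}
    (hcut : ∀ p ∈ T, ∀ q ∉ T, A p q = 1 ∧ A q p = 1) {q₀ p₀ : Fin N} (hq₀ : q₀ ∈ T)
    (hp₀ : p₀ ∉ T) : ∃ q ∈ T, ∃ p ∉ T, w q ≤ w p := by
  by_contra! hlt
  obtain ⟨hwpos, heff⟩ := hw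
  obtain ⟨pM, hpM, hpM_max⟩ := Tᶜ.exists_max_image w ⟨p₀, mem_compl.2 hp₀⟩
  obtain ⟨qm, hqm, hqm_min⟩ := T.exists_min_image w ⟨q₀, hq₀⟩
  rw [mem_compl] at hpM
  set t := w pM / w qm with ht
  have ht0 : 0 < t := div_pos (hwpos pM) (hwpos qm)
  have ht1 : t < 1 := (div_lt_one (hwpos qm)).2 (hlt qm hqm pM hpM)
  have hcross : ∀ p ∈ T, ∀ q ∉ T, w qm * w q ≤ w pM * w p := fun p hp q hq => by
    rw [mul_comm (w pM)]
    exact mul_le_mul (hqm_min p hp) (hpM_max q (mem_compl.2 hq)) (hwpos q).le (hwpos p).le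
  set v : Fin N → ℝ := fun p => if p ∈ T then t * w p else w p with hv
  have hvpos : ∀ p, 0 < v p := fun p => by
    by_cases hp : p ∈ T <;> simp [hv, hp, mul_pos ht0, hwpos]
  have hdom : ∀ p q, |A p q - v p / v q| ≤ |A p q - w p / w q| := by
    intro p q
    by_cases hp : p ∈ T <;> by_cases hq : q ∈ T
    · simp [hv, hp, hq, mul_div_mul_left _ _ ht0.ne']
    · simp only [hv, hp, hq, if_true, if_false, (hcut p hp q hq).1]
      refine Set.abs_sub_right_of_mem_uIcc (Set.mem_uIcc.2 (Or.inr ⟨?_, ?_⟩))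
      · rw [one_le_div (hwpos q), ht, div_mul_eq_mul_div, le_div_iff₀ (hwpos qm)]
        linarith [hcross p hp q hq]
      · exact div_le_div_of_nonneg_right (mul_le_of_le_one_left (hwpos p).le ht1.le)
          (hwpos q).le
    · simp only [hv, hp, hq, if_true, if_false, (hcut q hq p hp).2]
      refine Set.abs_sub_right_of_mem_uIcc (Set.mem_uIcc.2 (Or.inl ⟨?_, ?_⟩))
      · exact div_le_div_of_nonneg_left (hwpos p).le (mul_pos ht0 (hwpos q))
          (mul_le_of_le_one_left (hwpos q).le ht1.le)
      · rw [div_le_one (mul_pos ht0 (hwpos q)), ht, div_mul_eq_mul_div, le_div_iff₀ (hwpos qm)]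
        linarith [hcross q hq p hp]
    · simp [hv, hp, hq]
  have h := heff v hvpos hdom q₀ p₀
  simp only [hv, hq₀, hp₀, if_true, if_false, mul_div_assoc] at h
  exact ht1.ne (mul_eq_right₀ (div_pos (hwpos q₀) (hwpos p₀)).ne' |>.1 h)

theorem Efficient.exists_notMem_le (hw : Efficient A w) {S : Finset (Fin N)}
    (hS : ∀ p q, p ∈ S ∨ q ∈ S → A p q = 1) {j k : Fin N} (hk : k ∉ S) :
    ∃ k' ∉ S, w j ≤ w k' := by
  by_contra! hlt
  have hTS : ∀ p, w j ≤ w p → p ∈ S := fun p hp => by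
    by_contra h
    exact (hlt p h).not_ge hp
  obtain ⟨q, hq, p, hp, hqp⟩ := hw.exists_mem_le_of_cut_eq_one
    (T := univ.filter (w j ≤ w ·)) (q₀ := j) (p₀ := k)
    (fun p hp q _ => ⟨hS p q (.inl (hTS p (by simpa using hp))),
      hS q p (.inr (hTS p (by simpa using hp)))⟩)
    (by simp) (by simpa using hlt k hk)
  simp only [mem_filter, mem_univ, true_and, not_le] at hq hp
  linarith

theorem Efficient.exists_notMem_ge (hw : Efficient A w) {S : Finset (Fin N)}
    (hS : ∀ p q, p ∈ S ∨ q ∈ S → A p q = 1) {j k : Fin N} (hk : k ∉ S) :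
    ∃ k' ∉ S, w k' ≤ w j := by
  by_contra! hlt
  have hTS : ∀ q, w q ≤ w j → q ∈ S := fun q hq => by
    by_contra h
    exact (hlt q h).not_ge hq
  obtain ⟨q, hq, p, hp, hqp⟩ := hw.exists_mem_le_of_cut_eq_one
    (T := univ.filter (w j < w ·)) (q₀ := k) (p₀ := j)
    (fun p _ q hq => ⟨hS p q (.inr (hTS q (by simpa using hq))),
      hS q p (.inl (hTS q (by simpa using hq)))⟩)
    (by simpa using hlt k hk) (by simp)
  simp only [mem_filter, mem_univ, true_and, not_lt] at hq hp
  linarith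

theorem Efficient.apply_eq_of_forall_eq_one (hw : Efficient A w) (hA : ∀ p q, A p q = 1)
    (p q : Fin N) : w p = w q := by
  suffices h : ∀ p q, w p ≤ w q from (h p q).antisymm (h q p)
  intro p q
  by_contra! hlt
  obtain ⟨q', hq', p', hp', h⟩ := hw.exists_mem_le_of_cut_eq_one
    (T := univ.filter (w p ≤ w ·)) (q₀ := p) (p₀ := q)
    (fun _ _ _ _ => ⟨hA _ _, hA _ _⟩) (by simp) (by simpa using hlt)
  simp only [mem_filter, mem_univ, true_and, not_le] at hq' hp'
  linarith

theorem efficient_of_efficient_submatrix {m : ℕ} (κ : Fin m → Fin N) (hw : ∀ p, 0 < w p)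
    (hκ : Efficient (A.submatrix κ κ) (w ∘ κ))
    (hcut : ∀ p ∉ Set.range κ, ∀ a, A p (κ a) = 1 ∧ A (κ a) p = 1)
    (hbetween : ∀ p ∉ Set.range κ, (∃ a, w p ≤ w (κ a)) ∧ ∃ a, w (κ a) ≤ w p) :
    Efficient A w := by
  refine ⟨hw, fun v hv hdom => ?_⟩
  have hratio : ∀ p q, v p / v q = w p / w q ↔ v p / w p = v q / w q := fun p q =>
    div_eq_div_iff_div_eq_div' (hv q).ne' (hw p).ne'
  have hcore : ∀ a b, v (κ a) / w (κ a) = v (κ b) / w (κ b) := fun a b =>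
    (hratio _ _).1 (hκ.2 (v ∘ κ) (fun _ => hv _) (fun _ _ => hdom _ _) a b)
  have hmono : ∀ p q, A p q ≤ w p / w q → v p / w p ≤ v q / w q := fun p q h => by
    have h' := le_of_abs_sub_le_abs_sub h (hdom p q)
    rw [div_le_div_iff₀ (hv q) (hw q)] at h'
    rw [div_le_div_iff₀ (hw p) (hw q)]
    linarith
  have hpinned : ∀ p, ∃ a, v p / w p = v (κ a) / w (κ a) := by
    intro p
    by_cases hp : p ∈ Set.range κ
    · obtain ⟨a, rfl⟩ := hp
      exact ⟨a, rfl⟩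
    obtain ⟨⟨a, ha⟩, b, hb⟩ := hbetween p hp
    refine ⟨a, le_antisymm ?_ (hmono _ _ ?_)⟩
    · calc v p / w p ≤ v (κ b) / w (κ b) :=
            hmono _ _ (by rwa [(hcut p hp b).1, one_le_div (hw _)])
        _ = v (κ a) / w (κ a) := hcore b a
    · rwa [(hcut p hp a).2, one_le_div (hw p)]
  intro p q
  obtain ⟨a, ha⟩ := hpinned p
  obtain ⟨b, hb⟩ := hpinned q
  exact (hratio p q).2 (by rw [ha, hb, hcore])

end Efficient

/-- If `w` is efficient for `A` and `w[{1,…,s}]` is efficient for `B`, then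
`w(i)` is efficient for `A(i)` for every `i ∈ {s+1,…,n}`. -/
theorem stmt_8 {n s : ℕ} (hs : s ≤ n) (A : Matrix (Fin (n + 1)) (Fin (n + 1)) ℝ)
    (hblock : ∀ i j : Fin (n + 1), s ≤ i.val ∨ s ≤ j.val → A i j = 1)
    (w : Fin (n + 1) → ℝ) (hw : Efficient A w)
    (hsub : Efficient
      (A.submatrix (Fin.castLE (by omega : s ≤ n + 1)) (Fin.castLE (by omega : s ≤ n + 1)))
      (w ∘ Fin.castLE (by omega : s ≤ n + 1)))
    (i : Fin (n + 1)) (hi : s ≤ i.val) :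
    Efficient (A.submatrix i.succAbove i.succAbove) (w ∘ i.succAbove) := by
  have hwpos : ∀ p, 0 < (w ∘ i.succAbove) p := fun p => hw.1 _
  rcases Nat.eq_zero_or_pos s with rfl | hs0
  · have hA : ∀ p q, A p q = 1 := fun p q => hblock p q (.inl p.val.zero_le)
    refine efficient_of_forall_eq_div hwpos fun p q => ?_
    simp [hA, hw.apply_eq_of_forall_eq_one hA (i.succAbove p) (i.succAbove q), (hw.1 _).ne']
  set S : Finset (Fin (n + 1)) := univ.filter (s ≤ ·.val)
  have hS : ∀ p q, p ∈ S ∨ q ∈ S → A p q = 1 := by simpa [S] using hblock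
  have h0 : (⟨0, by omega⟩ : Fin (n + 1)) ∉ S := by simp [S]; omega
  have hbig : ∀ p : Fin n, s ≤ p.val → s ≤ (i.succAbove p).val := fun p hp =>
    hp.trans (Fin.val_le_val_succAbove i p)
  refine efficient_of_efficient_submatrix (Fin.castLE hs) hwpos ?_ ?_ ?_
  · have hcomp : i.succAbove ∘ Fin.castLE hs = Fin.castLE (by omega) :=
      funext (Fin.succAbove_castLE hs i hi)
    rwa [Matrix.submatrix_submatrix, Function.comp_assoc, hcomp]
  · intro p hp a
    rw [Fin.range_castLE, Set.mem_ofPred_eq, not_lt] at hp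
    exact ⟨hblock _ _ (.inl (hbig p hp)), hblock _ _ (.inr (hbig p hp))⟩
  · intro p hp
    rw [Fin.range_castLE, Set.mem_ofPred_eq, not_lt] at hp
    obtain ⟨k, hk, hle⟩ := hw.exists_notMem_le hS h0 (j := i.succAbove p)
    obtain ⟨k', hk', hge⟩ := hw.exists_notMem_ge hS h0 (j := i.succAbove p)
    simp only [S, mem_filter, mem_univ, true_and, not_le] at hk hk'
    simp only [Function.comp_apply, Fin.succAbove_castLE hs i hi]
    exact ⟨⟨⟨k, hk⟩, hle⟩, ⟨k', hk'⟩, hge⟩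
end

section
/- Let x > 0, n > s >= 1, and let A be the n-by-n reciprocal matrix of block form [[C_s(x), J],[J, J]], where C_s(x) is the s-by-s reciprocal matrix with all above-diagonal entries equal to x. Then the Perron eigenvector of A is efficient for A. -/
open Relation
open scoped Matrix

def efficiencyGraph {n : ℕ} (A : Matrix (Fin n) (Fin n) ℝ) (w : Fin n → ℝ) (i j : Fin n) : Prop :=
  A i j ≤ w i / w j

theorem div_le_div_of_efficiencyGraph {n : ℕ} {A : Matrix (Fin n) (Fin n) ℝ} {v w : Fin n → ℝ}
    (hv : ∀ i, 0 < v i) (hw : ∀ i, 0 < w i) {i j : Fin n}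
    (hdom : |A i j - v i / v j| ≤ |A i j - w i / w j|) (hij : efficiencyGraph A w i j) :
    v i / w i ≤ v j / w j := by
  rw [abs_of_nonpos (sub_nonpos.mpr hij)] at hdom
  have hvw : v i / v j ≤ w i / w j := by linarith [neg_abs_le (A i j - v i / v j)]
  rw [div_le_div_iff₀ (hv j) (hw j)] at hvw
  rw [div_le_div_iff₀ (hw i) (hw j)]
  linarith

theorem efficient_of_reflTransGen {n : ℕ} {A : Matrix (Fin n) (Fin n) ℝ} {w : Fin n → ℝ}
    (hw : ∀ i, 0 < w i) (hconn : ∀ i j, ReflTransGen (efficiencyGraph A w) i j) :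
    Efficient A w := by
  refine ⟨hw, fun v hv hdom i j => ?_⟩
  have hmono : ∀ i j, ReflTransGen (efficiencyGraph A w) i j → v i / w i ≤ v j / w j := by
    intro i j h
    induction h with
    | refl => exact le_rfl
    | tail _ hbc ih => exact ih.trans (div_le_div_of_efficiencyGraph hv hw (hdom _ _) hbc)
  have hij : v i / w i = v j / w j := le_antisymm (hmono i j (hconn i j)) (hmono j i (hconn j i))
  rw [div_eq_div_iff (hw i).ne' (hw j).ne'] at hij
  rw [div_eq_div_iff (hv j).ne' (hw j).ne']
  linear_combination hij

theorem reflTransGen_of_descending_cycle {n s : ℕ} (hs1 : 1 ≤ s) (hs : s < n)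
    {R : Fin n → Fin n → Prop}
    (hdesc : ∀ i j : Fin n, j.val + 1 = i.val → i.val < s → R i j)
    (hout : ∀ i k : Fin n, i.val = 0 → s ≤ k.val → R i k)
    (hin : ∀ k j : Fin n, s ≤ k.val → j.val + 1 = s → R k j) (i j : Fin n) :
    ReflTransGen R i j := by
  have descend : ∀ d, ∀ i j : Fin n, i.val = j.val + d → i.val < s → ReflTransGen R i j := by
    intro d
    induction d with
    | zero => intro i j h _; obtain rfl : i = j := Fin.ext (by omega); rfl
    | succ d ih =>
      intro i j h hi
      exact .head (hdesc i ⟨i.val - 1, by omega⟩ (by simp; omega) hi)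
        (ih _ j (by simp; omega) (by simp; omega))
  let zero : Fin n := ⟨0, by omega⟩
  let last : Fin n := ⟨s - 1, by omega⟩
  let outer : Fin n := ⟨s, hs⟩
  have hlast : ∀ j : Fin n, j.val < s → ReflTransGen R last j := fun j hj =>
    descend (s - 1 - j.val) last j (by simp [last]; omega) (by simp [last]; omega)
  have to_zero : ReflTransGen R i zero := by
    by_cases hi : i.val < s
    · exact descend i.val i zero (by simp [zero]) hi
    · exact .head (hin i last (by omega) (by simp [last]; omega))
        (hlast zero (by simp [zero]; omega))
  have from_zero : ReflTransGen R zero j := by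
    by_cases hj : j.val < s
    · exact .head (hout zero outer rfl le_rfl)
        (.head (hin outer last le_rfl (by simp [last]; omega)) (hlast j hj))
    · exact .single (hout zero j rfl (by omega))
  exact to_zero.trans from_zero

namespace Matrix

variable {ι : Type*} [Fintype ι] {A : Matrix ι ι ℝ} {w : ι → ℝ} {μ : ℝ}

theorem pos_of_mulVec_eq_smul [Nonempty ι] (hA : ∀ i j, 0 < A i j) (hw : ∀ i, 0 < w i)
    (heig : A *ᵥ w = μ • w) : 0 < μ := by
  obtain ⟨i⟩ := ‹Nonempty ι›
  have hsum : 0 < (A *ᵥ w) i :=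
    Finset.sum_pos (fun t _ => mul_pos (hA i t) (hw t)) Finset.univ_nonempty
  rw [heig, Pi.smul_apply, smul_eq_mul] at hsum
  exact pos_of_mul_pos_left hsum (hw i).le

theorem mul_le_mul_of_row_le_of_mulVec_eq_smul (hμ : 0 < μ) (hw : ∀ i, 0 ≤ w i)
    (heig : A *ᵥ w = μ • w) ⦃i j : ι⦄ ⦃a b : ℝ⦄ (hrow : ∀ t, a * A i t ≤ b * A j t) :
    a * w i ≤ b * w j := by
  have hrows : a * (A *ᵥ w) i ≤ b * (A *ᵥ w) j := by
    simp only [mulVec, dotProduct, Finset.mul_sum, ← mul_assoc]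
    exact Finset.sum_le_sum fun t _ => mul_le_mul_of_nonneg_right (hrow t) (hw t)
  simp only [heig, Pi.smul_apply, smul_eq_mul] at hrows
  exact le_of_mul_le_mul_left (by linarith) hμ

end Matrix

/-- The matrix `[[Cₛ(x), J], [J, J]]`. -/
noncomputable def blockMatrix (n s : ℕ) (x : ℝ) : Matrix (Fin n) (Fin n) ℝ :=
  Matrix.of fun i j =>
    if s ≤ i.val ∨ s ≤ j.val then 1
    else if i.val < j.val then x else if j.val < i.val then x⁻¹ else 1

section blockMatrix

variable {n s : ℕ} {x : ℝ} {i j : Fin n}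

theorem blockMatrix_pos (hx : 0 < x) (i j : Fin n) : 0 < blockMatrix n s x i j := by
  simp only [blockMatrix, Matrix.of_apply]
  split_ifs <;> positivity

theorem blockMatrix_of_le (h : s ≤ i.val ∨ s ≤ j.val) : blockMatrix n s x i j = 1 := by
  simp [blockMatrix, h]

theorem blockMatrix_of_succ_eq (hij : i.val + 1 = j.val) (hj : j.val < s) :
    blockMatrix n s x i j = x := by
  simp only [blockMatrix, Matrix.of_apply]
  split_ifs <;> first | rfl | omega

theorem blockMatrix_of_eq_succ (hij : i.val = j.val + 1) (hi : i.val < s) :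
    blockMatrix n s x i j = x⁻¹ := by
  simp only [blockMatrix, Matrix.of_apply]
  split_ifs <;> first | rfl | omega

theorem blockMatrix_le_mul_of_succ_eq (hx1 : 1 ≤ x) (hij : i.val + 1 = j.val) (t : Fin n) :
    blockMatrix n s x i t ≤ x * blockMatrix n s x j t := by
  have hxx : x * x⁻¹ = 1 := mul_inv_cancel₀ (by linarith : (0 : ℝ) < x).ne'
  have : x⁻¹ ≤ 1 := inv_le_one_of_one_le₀ hx1
  simp only [blockMatrix, Matrix.of_apply]
  split_ifs <;> first | omega | nlinarith

theorem mul_blockMatrix_le_of_succ_eq (hx1 : x ≤ 1) (hx : 0 < x) (hij : i.val + 1 = j.val)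
    (t : Fin n) :
    x * blockMatrix n s x j t ≤ blockMatrix n s x i t := by
  have hxx : x * x⁻¹ = 1 := mul_inv_cancel₀ hx.ne'
  have : 1 ≤ x⁻¹ := (one_le_inv₀ hx).mpr hx1
  simp only [blockMatrix, Matrix.of_apply]
  split_ifs <;> first | omega | nlinarith

theorem one_le_blockMatrix_of_val_eq_zero (hx1 : 1 ≤ x) (hi : i.val = 0) (t : Fin n) :
    1 ≤ blockMatrix n s x i t := by
  simp only [blockMatrix, Matrix.of_apply]
  split_ifs <;> first | omega | linarith

theorem blockMatrix_le_one_of_val_eq_zero (hx1 : x ≤ 1) (hi : i.val = 0) (t : Fin n) :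
    blockMatrix n s x i t ≤ 1 := by
  simp only [blockMatrix, Matrix.of_apply]
  split_ifs <;> first | omega | linarith

theorem blockMatrix_le_one_of_succ_eq (hx1 : 1 ≤ x) (hi : i.val + 1 = s) (t : Fin n) :
    blockMatrix n s x i t ≤ 1 := by
  simp only [blockMatrix, Matrix.of_apply]
  split_ifs <;> first | omega | exact inv_le_one_of_one_le₀ hx1 | rfl

theorem one_le_blockMatrix_of_succ_eq (hx1 : x ≤ 1) (hx : 0 < x) (hi : i.val + 1 = s)
    (t : Fin n) :
    1 ≤ blockMatrix n s x i t := by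
  simp only [blockMatrix, Matrix.of_apply]
  split_ifs <;> first | omega | exact (one_le_inv₀ hx).mpr hx1 | rfl

variable {w : Fin n → ℝ} {μ : ℝ}

theorem reflTransGen_efficiencyGraph_blockMatrix_of_one_le (hs1 : 1 ≤ s) (hs : s < n)
    (hx1 : 1 ≤ x) (hμ : 0 < μ) (hw : ∀ i, 0 < w i) (heig : blockMatrix n s x *ᵥ w = μ • w)
    (i j : Fin n) : ReflTransGen (efficiencyGraph (blockMatrix n s x) w) i j := by
  have hcmp := Matrix.mul_le_mul_of_row_le_of_mulVec_eq_smul hμ (fun t => (hw t).le) heig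
  refine reflTransGen_of_descending_cycle hs1 hs (fun i j hji hi => ?_) (fun i k hi hk => ?_)
    (fun k j hk hj => ?_) i j
  · have hwj : 1 * w j ≤ x * w i :=
      hcmp fun t => by simpa using blockMatrix_le_mul_of_succ_eq hx1 hji t
    rw [efficiencyGraph, blockMatrix_of_eq_succ hji.symm hi, le_div_iff₀ (hw j)]
    rw [inv_mul_le_iff₀ (by linarith)]
    linarith
  · have hwk : 1 * w k ≤ 1 * w i := hcmp fun t => by
      simpa [blockMatrix_of_le (Or.inl hk)] using one_le_blockMatrix_of_val_eq_zero hx1 hi t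
    rw [efficiencyGraph, blockMatrix_of_le (Or.inr hk), le_div_iff₀ (hw k)]
    linarith
  · have hwj : 1 * w j ≤ 1 * w k := hcmp fun t => by
      simpa [blockMatrix_of_le (Or.inl hk)] using blockMatrix_le_one_of_succ_eq hx1 hj t
    rw [efficiencyGraph, blockMatrix_of_le (Or.inl hk), le_div_iff₀ (hw j)]
    linarith

theorem reflTransGen_efficiencyGraph_blockMatrix_of_le_one (hs1 : 1 ≤ s) (hs : s < n)
    (hx : 0 < x) (hx1 : x ≤ 1) (hμ : 0 < μ) (hw : ∀ i, 0 < w i)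
    (heig : blockMatrix n s x *ᵥ w = μ • w) (i j : Fin n) :
    ReflTransGen (efficiencyGraph (blockMatrix n s x) w) i j := by
  have hcmp := Matrix.mul_le_mul_of_row_le_of_mulVec_eq_smul hμ (fun t => (hw t).le) heig
  rw [← reflTransGen_swap]
  refine reflTransGen_of_descending_cycle hs1 hs (fun i j hji hi => ?_) (fun i k hi hk => ?_)
    (fun k j hk hj => ?_) j i
  · have hwi : x * w i ≤ 1 * w j :=
      hcmp fun t => by simpa using mul_blockMatrix_le_of_succ_eq hx1 hx hji t
    rw [Function.swap, efficiencyGraph, blockMatrix_of_succ_eq hji hi, le_div_iff₀ (hw i)]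
    linarith
  · have hwi : 1 * w i ≤ 1 * w k := hcmp fun t => by
      simpa [blockMatrix_of_le (Or.inl hk)] using blockMatrix_le_one_of_val_eq_zero hx1 hi t
    rw [Function.swap, efficiencyGraph, blockMatrix_of_le (Or.inl hk), le_div_iff₀ (hw i)]
    linarith
  · have hwk : 1 * w k ≤ 1 * w j := hcmp fun t => by
      simpa [blockMatrix_of_le (Or.inl hk)] using one_le_blockMatrix_of_succ_eq hx1 hx hj t
    rw [Function.swap, efficiencyGraph, blockMatrix_of_le (Or.inr hk), le_div_iff₀ (hw k)]
    linarith

end blockMatrix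

theorem stmt_18_general {n s : ℕ} (hs1 : 1 ≤ s) (hs : s < n) (x : ℝ) (hx : 0 < x)
    (A : Matrix (Fin n) (Fin n) ℝ)
    (hB : ∀ i j : Fin n, i.val < s → j.val < s → A i j =
      if i.val < j.val then x else if j.val < i.val then x⁻¹ else 1)
    (hblock : ∀ i j : Fin n, s ≤ i.val ∨ s ≤ j.val → A i j = 1)
    (w : Fin n → ℝ) (hw : ∀ i, 0 < w i) (μ : ℝ)
    (heig : A.mulVec w = μ • w) :
    Efficient A w := by
  obtain rfl : A = blockMatrix n s x := by
    ext i j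
    by_cases h : s ≤ i.val ∨ s ≤ j.val
    · rw [hblock i j h, blockMatrix_of_le h]
    · rw [hB i j (by omega) (by omega)]
      simp [blockMatrix, h]
  have : Nonempty (Fin n) := ⟨⟨s, hs⟩⟩
  have hμ : 0 < μ := Matrix.pos_of_mulVec_eq_smul (blockMatrix_pos hx) hw heig
  refine efficient_of_reflTransGen hw fun i j => ?_
  rcases le_total 1 x with hx1 | hx1
  · exact reflTransGen_efficiencyGraph_blockMatrix_of_one_le hs1 hs hx1 hμ hw heig i j
  · exact reflTransGen_efficiencyGraph_blockMatrix_of_le_one hs1 hs hx hx1 hμ hw heig i j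

/-- The Perron eigenvector of the block perturbed consistent matrix
`[[Cₛ(x), J], [J, J]]` is efficient. -/
theorem stmt_18 {n s : ℕ} (hs1 : 1 ≤ s) (hs : s < n) (x : ℝ) (hx : 0 < x)
    (A : Matrix (Fin n) (Fin n) ℝ) (hA : Reciprocal A)
    (hB : ∀ i j : Fin n, i.val < s → j.val < s → A i j =
      if i.val < j.val then x else if j.val < i.val then x⁻¹ else 1)
    (hblock : ∀ i j : Fin n, s ≤ i.val ∨ s ≤ j.val → A i j = 1)
    (w : Fin n → ℝ) (hw : ∀ i, 0 < w i) (μ : ℝ)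
    (heig : A.mulVec w = μ • w) :
    Efficient A w :=
  stmt_18_general hs1 hs x hx A hB hblock w hw μ heig
end
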